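/- arXiv:2510.02405 — 7 statements merged into one kernel-verified Lean document; each statement's English description precedes it below -/
import Mathlib

section
/- Let n, m be positive integers with m ≤ n and let O, S ∈ ℝ^{n×m} be matrices all of whose columns are nonzero. Then S_c(O) = S_c(S) if and only if there exist an orthogonal matrix Q ∈ ℝ^{n×n} and a diagonal matrix N ∈ ℝ^{m×m} with strictly positive diagonal entries such that Q O N = S. -/
open Matrix

/-- Euclidean dot product on `ℝ^n`. -/
noncomputable def dotv {n : ℕ} (u v : Fin n → ℝ) : ℝ := ∑ i, u i * v i

/-- Euclidean norm on `ℝ^n`. -/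
noncomputable def enormv {n : ℕ} (u : Fin n → ℝ) : ℝ := Real.sqrt (dotv u u)

/-- Arithmetic mean of a vector. -/
noncomputable def meanv {n : ℕ} (f : Fin n → ℝ) : ℝ := (∑ i, f i) / n

/-- Mean-centered vector `f̄ = f - Mean(f)·𝟙`. -/
noncomputable def centv {n : ℕ} (f : Fin n → ℝ) : Fin n → ℝ := fun i => f i - meanv f

/-- Variance of a vector: `Var(f) = (1/n)‖f̄‖²`. -/
noncomputable def varv {n : ℕ} (f : Fin n → ℝ) : ℝ := (∑ i, (centv f i) ^ 2) / n

/-- The `j`-th column of a matrix. -/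
noncomputable def col {n m : ℕ} (A : Matrix (Fin n) (Fin m) ℝ) (j : Fin m) : Fin n → ℝ :=
  fun i => A i j

/-- Cosine similarity matrix: `S_c(A)_{jk} = (A_j·A_k)/(‖A_j‖‖A_k‖)`. -/
noncomputable def cosSim {n m : ℕ} (A : Matrix (Fin n) (Fin m) ℝ) : Matrix (Fin m) (Fin m) ℝ :=
  fun j k => dotv (_root_.col A j) (_root_.col A k) / (enormv (_root_.col A j) * enormv (_root_.col A k))

/-- Column-wise mean centering of a matrix: `Ā_j = A_j − Mean(A_j)·𝟙`. -/
noncomputable def centM {n m : ℕ} (A : Matrix (Fin n) (Fin m) ℝ) : Matrix (Fin n) (Fin m) ℝ :=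
  fun i j => A i j - meanv (_root_.col A j)

/-- Pearson correlation matrix: cosine similarity of the centered columns. -/
noncomputable def corrM {n m : ℕ} (A : Matrix (Fin n) (Fin m) ℝ) : Matrix (Fin m) (Fin m) ℝ :=
  cosSim (centM A)

/-- Frobenius norm of a matrix. -/
noncomputable def frob {n m : ℕ} (A : Matrix (Fin n) (Fin m) ℝ) : ℝ :=
  Real.sqrt (∑ i, ∑ j, (A i j) ^ 2)

/-- Given the diagonal entries `σ` of a diagonal matrix `Σ` with nonnegative entries,
`Isig σ` is the diagonal matrix `I_Σ` with `(I_Σ)_{ii} = 1` if `Σ_{ii} > 0` and `0` otherwise. -/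
noncomputable def Isig {n : ℕ} (σ : Fin n → ℝ) : Matrix (Fin n) (Fin n) ℝ :=
  Matrix.diagonal (fun i => if 0 < σ i then (1 : ℝ) else 0)

/-! Cosine similarity only sees the Gram matrix `AᵀA` up to positive diagonal rescaling, so it is
invariant under `A ↦ Q * A * diagonal d`. Conversely, if `cosSim O = cosSim S`, the matrices with
normalized columns have the same Gram matrix, and two matrices with the same Gram matrix differ
by an orthogonal map: `A x ↦ B x` is a well-defined isometry of the column space of `A`, which
extends to the whole space. -/

theorem LinearMap.exists_linearIsometryEquiv_comp_eq_of_norm_eq {𝕜 W V : Type*} [RCLike 𝕜]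
    [AddCommGroup W] [Module 𝕜 W] [NormedAddCommGroup V] [InnerProductSpace 𝕜 V]
    [FiniteDimensional 𝕜 V] {f g : W →ₗ[𝕜] V} (h : ∀ x, ‖f x‖ = ‖g x‖) :
    ∃ L : V ≃ₗᵢ[𝕜] V, ∀ x, L (f x) = g x := by
  have hker : LinearMap.ker f ≤ LinearMap.ker g := fun x hx => by
    simpa [← norm_eq_zero, ← h x] using hx
  let φ : LinearMap.range f →ₗ[𝕜] V :=
    (LinearMap.ker f).liftQ g hker ∘ₗ f.quotKerEquivRange.symm.toLinearMap
  have hφ : ∀ x, φ ⟨f x, LinearMap.mem_range_self f x⟩ = g x := fun x => by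
    simp [φ, f.quotKerEquivRange_symm_apply_image]
  let L : LinearMap.range f →ₗᵢ[𝕜] V := ⟨φ, by rintro ⟨_, x, rfl⟩; simp [hφ, h]⟩
  exact ⟨L.extend.toLinearIsometryEquiv rfl, fun x =>
    (L.extend_apply ⟨f x, _⟩).trans (hφ x)⟩

namespace Matrix

theorem mul_diagonal_transpose_mul_self {ι κ R : Type*} [Fintype ι] [CommSemiring R]
    [Fintype κ] [DecidableEq κ] (A : Matrix ι κ R) (d : κ → R) :
    (A * diagonal d)ᵀ * (A * diagonal d) = diagonal d * (Aᵀ * A) * diagonal d := by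
  simp only [transpose_mul, diagonal_transpose, Matrix.mul_assoc]

variable {𝕜 : Type*} [RCLike 𝕜] {ι κ : Type*} [Fintype ι] [DecidableEq ι] [Fintype κ]
  [DecidableEq κ]

theorem inner_toEuclideanLin_self (A : Matrix ι κ 𝕜) (x : EuclideanSpace 𝕜 κ) :
    inner 𝕜 (toEuclideanLin A x) (toEuclideanLin A x) =
      inner 𝕜 x (toEuclideanLin (Aᴴ * A) x) := by
  rw [← LinearMap.adjoint_inner_right, ← toEuclideanLin_conjTranspose_eq_adjoint]
  congr 1
  ext i
  simp [mulVec_mulVec]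

theorem norm_toEuclideanLin_eq_of_conjTranspose_mul_self_eq {A B : Matrix ι κ 𝕜}
    (h : Aᴴ * A = Bᴴ * B) (x : EuclideanSpace 𝕜 κ) :
    ‖toEuclideanLin A x‖ = ‖toEuclideanLin B x‖ := by
  rw [@norm_eq_sqrt_re_inner 𝕜, @norm_eq_sqrt_re_inner 𝕜, inner_toEuclideanLin_self,
    inner_toEuclideanLin_self, h]

theorem toEuclideanCLM_symm_mem_unitaryGroup
    (L : EuclideanSpace 𝕜 ι ≃ₗᵢ[𝕜] EuclideanSpace 𝕜 ι) :
    (toEuclideanCLM (n := ι) (𝕜 := 𝕜)).symm (L : EuclideanSpace 𝕜 ι →L[𝕜] _) ∈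
      unitaryGroup ι 𝕜 :=
  Unitary.map_mem _ (Unitary.linearIsometryEquiv.symm L).2

theorem toEuclideanCLM_symm_mulVec (L : EuclideanSpace 𝕜 ι ≃ₗᵢ[𝕜] EuclideanSpace 𝕜 ι)
    (v : ι → 𝕜) :
    (toEuclideanCLM (n := ι) (𝕜 := 𝕜)).symm (L : EuclideanSpace 𝕜 ι →L[𝕜] _) *ᵥ v =
      (L (WithLp.toLp 2 v)).ofLp := by
  rw [← ofLp_toEuclideanCLM, StarAlgEquiv.apply_symm_apply]
  rfl

theorem exists_mem_unitaryGroup_mul_eq_of_conjTranspose_mul_self_eq {A B : Matrix ι κ 𝕜}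
    (h : Aᴴ * A = Bᴴ * B) : ∃ U ∈ unitaryGroup ι 𝕜, U * A = B := by
  obtain ⟨L, hL⟩ := LinearMap.exists_linearIsometryEquiv_comp_eq_of_norm_eq
    (norm_toEuclideanLin_eq_of_conjTranspose_mul_self_eq h)
  refine ⟨_, toEuclideanCLM_symm_mem_unitaryGroup L, ext_iff_mulVec.mpr fun v => ?_⟩
  rw [← mulVec_mulVec, toEuclideanCLM_symm_mulVec]
  exact congrArg WithLp.ofLp (hL (WithLp.toLp 2 v))

theorem exists_orthogonal_mul_eq_of_transpose_mul_self_eq {A B : Matrix ι κ ℝ}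
    (h : Aᵀ * A = Bᵀ * B) : ∃ Q : Matrix ι ι ℝ, Qᵀ * Q = 1 ∧ Q * A = B := by
  obtain ⟨Q, hQ, hQA⟩ := exists_mem_unitaryGroup_mul_eq_of_conjTranspose_mul_self_eq
    (A := A) (B := B) (by simpa only [conjTranspose_eq_transpose_of_trivial] using h)
  refine ⟨Q, ?_, hQA⟩
  simpa only [star_eq_conjTranspose, conjTranspose_eq_transpose_of_trivial] using
    mem_unitaryGroup_iff'.mp hQ

end Matrix

section CosineSimilarity

variable {n m : ℕ}

theorem dotv_col_col (A : Matrix (Fin n) (Fin m) ℝ) (j k : Fin m) :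
    dotv (_root_.col A j) (_root_.col A k) = (Aᵀ * A) j k := by
  simp [dotv, _root_.col, mul_apply]

theorem enormv_pos {u : Fin n → ℝ} (hu : u ≠ 0) : 0 < enormv u :=
  Real.sqrt_pos.mpr <| (Finset.sum_nonneg fun i _ => mul_self_nonneg (u i)).lt_of_ne'
    (dotProduct_self_eq_zero.not.mpr hu)

theorem cosSim_apply (A : Matrix (Fin n) (Fin m) ℝ) (j k : Fin m) :
    cosSim A j k = (Aᵀ * A) j k / (√((Aᵀ * A) j j) * √((Aᵀ * A) k k)) := by
  simp only [cosSim, enormv, dotv_col_col]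

theorem cosSim_eq_of_transpose_mul_self_eq {n' : ℕ} {A : Matrix (Fin n) (Fin m) ℝ}
    {B : Matrix (Fin n') (Fin m) ℝ} (h : Aᵀ * A = Bᵀ * B) : cosSim A = cosSim B := by
  ext j k
  rw [cosSim_apply, cosSim_apply, h]

theorem cosSim_orthogonal_mul {Q : Matrix (Fin n) (Fin n) ℝ} (hQ : Qᵀ * Q = 1)
    (A : Matrix (Fin n) (Fin m) ℝ) : cosSim (Q * A) = cosSim A :=
  cosSim_eq_of_transpose_mul_self_eq <| by
    rw [transpose_mul, Matrix.mul_assoc, ← Matrix.mul_assoc Qᵀ, hQ, Matrix.one_mul]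

theorem cosSim_mul_diagonal (A : Matrix (Fin n) (Fin m) ℝ) {d : Fin m → ℝ}
    (hd : ∀ j, 0 < d j) : cosSim (A * diagonal d) = cosSim A := by
  have hsqrt : ∀ j x, √(d j * x * d j) = d j * √x := fun j x => by
    rw [mul_right_comm, ← sq, Real.sqrt_mul (sq_nonneg _), Real.sqrt_sq (hd j).le]
  ext j k
  rw [cosSim_apply, cosSim_apply, mul_diagonal_transpose_mul_self]
  simp only [mul_diagonal, diagonal_mul, hsqrt]
  rw [mul_mul_mul_comm, mul_right_comm, mul_div_mul_left _ _ (mul_pos (hd j) (hd k)).ne']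

noncomputable def normalizeCols (A : Matrix (Fin n) (Fin m) ℝ) : Matrix (Fin n) (Fin m) ℝ :=
  A * diagonal fun j => (enormv (_root_.col A j))⁻¹

theorem cosSim_eq_transpose_mul_self_normalizeCols (A : Matrix (Fin n) (Fin m) ℝ) :
    cosSim A = (normalizeCols A)ᵀ * normalizeCols A := by
  ext j k
  rw [normalizeCols, mul_diagonal_transpose_mul_self, cosSim]
  simp only [mul_diagonal, diagonal_mul, dotv_col_col]
  ring

theorem normalizeCols_mul_diagonal_enormv {A : Matrix (Fin n) (Fin m) ℝ}
    (hA : ∀ j, _root_.col A j ≠ 0) :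
    normalizeCols A * diagonal (fun j => enormv (_root_.col A j)) = A := by
  rw [normalizeCols, Matrix.mul_assoc, diagonal_mul_diagonal]
  simp [fun j => inv_mul_cancel₀ (enormv_pos (hA j)).ne']

end CosineSimilarity

theorem cosSim_eq_iff_orthogonal_diag_general {n m : ℕ}
    (O S : Matrix (Fin n) (Fin m) ℝ)
    (hO : ∀ j, _root_.col O j ≠ 0) (hS : ∀ j, _root_.col S j ≠ 0) :
    cosSim O = cosSim S ↔
      ∃ (Q : Matrix (Fin n) (Fin n) ℝ) (d : Fin m → ℝ),
        Qᵀ * Q = 1 ∧ (∀ j, 0 < d j) ∧ Q * O * Matrix.diagonal d = S := by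
  constructor
  · intro h
    obtain ⟨Q, hQ, hQO⟩ := exists_orthogonal_mul_eq_of_transpose_mul_self_eq
      (A := normalizeCols O) (B := normalizeCols S)
      (by rw [← cosSim_eq_transpose_mul_self_normalizeCols, h,
        cosSim_eq_transpose_mul_self_normalizeCols])
    refine ⟨Q, fun j => (enormv (_root_.col O j))⁻¹ * enormv (_root_.col S j), hQ,
      fun j => mul_pos (inv_pos.mpr (enormv_pos (hO j))) (enormv_pos (hS j)), ?_⟩
    calc Q * O * diagonal (fun j => (enormv (_root_.col O j))⁻¹ * enormv (_root_.col S j))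
        = Q * normalizeCols O * diagonal (fun j => enormv (_root_.col S j)) := by
          rw [normalizeCols, ← diagonal_mul_diagonal, Matrix.mul_assoc, Matrix.mul_assoc,
            Matrix.mul_assoc]
      _ = S := by rw [hQO, normalizeCols_mul_diagonal_enormv hS]
  · rintro ⟨Q, d, hQ, hd, rfl⟩
    rw [cosSim_mul_diagonal _ hd, cosSim_orthogonal_mul hQ]

/-- Two matrices with nonzero columns have the same cosine similarity matrix
iff one is obtained from the other by an orthogonal transformation and a positive
diagonal column rescaling. -/
theorem cosSim_eq_iff_orthogonal_diag {n m : ℕ} (hn : 0 < n) (hm : 0 < m) (hmn : m ≤ n)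
    (O S : Matrix (Fin n) (Fin m) ℝ)
    (hO : ∀ j, _root_.col O j ≠ 0) (hS : ∀ j, _root_.col S j ≠ 0) :
    cosSim O = cosSim S ↔
      ∃ (Q : Matrix (Fin n) (Fin n) ℝ) (d : Fin m → ℝ),
        Qᵀ * Q = 1 ∧ (∀ j, 0 < d j) ∧ Q * O * Matrix.diagonal d = S :=
  cosSim_eq_iff_orthogonal_diag_general O S hO hS
end

section
/- Let O ∈ ℝ^{n×m} have all centered columns Ō_j nonzero, let M ∈ ℝ^{p×n} satisfy MᵀM = I_n, let N ∈ ℝ^{m×m} be diagonal with strictly positive diagonal entries, and let S ∈ ℝ^{p×m} be any matrix whose centered matrix satisfies S̄ = M Ō N. Then all centered columns of S are nonzero and Corr(S) = Corr(O). -/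
open Matrix

/-!
The centered columns of `S` are `d j • M *ᵥ Ō_j`. Since `Mᵀ M = 1`, multiplication by `M`
preserves dot products, hence norms, so it leaves cosines unchanged and kills no nonzero
vector; a positive factor `d j` scales a column's dot products and its norm alike, and
cancels in the cosine.
-/
lemma col_mul {n m p : ℕ} (M : Matrix (Fin p) (Fin n) ℝ) (A : Matrix (Fin n) (Fin m) ℝ)
    (j : Fin m) : _root_.col (M * A) j = M *ᵥ _root_.col A j := by
  ext i
  simp only [_root_.col, mul_apply, mulVec, dotProduct]

lemma col_mul_diagonal {n m : ℕ} (A : Matrix (Fin n) (Fin m) ℝ) (d : Fin m → ℝ) (j : Fin m) :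
    _root_.col (A * diagonal d) j = d j • _root_.col A j := by
  ext i
  simp only [_root_.col, mul_diagonal, Pi.smul_apply, smul_eq_mul, mul_comm]

lemma dotv_smul_smul {n : ℕ} (a b : ℝ) (u v : Fin n → ℝ) :
    dotv (a • u) (b • v) = a * b * dotv u v := by
  simp only [dotv, Pi.smul_apply, smul_eq_mul, Finset.mul_sum]
  exact Finset.sum_congr rfl fun i _ => by ring

lemma enormv_smul_of_nonneg {n : ℕ} {a : ℝ} (ha : 0 ≤ a) (u : Fin n → ℝ) :
    enormv (a • u) = a * enormv u := by
  rw [enormv, enormv, dotv_smul_smul, ← sq, Real.sqrt_mul (sq_nonneg a), Real.sqrt_sq ha]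

lemma dotv_mulVec_of_transpose_mul_self_eq_one {n p : ℕ} {M : Matrix (Fin p) (Fin n) ℝ}
    (hM : Mᵀ * M = 1) (u v : Fin n → ℝ) : dotv (M *ᵥ u) (M *ᵥ v) = dotv u v := by
  change (M *ᵥ u) ⬝ᵥ (M *ᵥ v) = u ⬝ᵥ v
  rw [dotProduct_mulVec, ← mulVec_transpose, mulVec_mulVec, hM, one_mulVec]

lemma enormv_mulVec_of_transpose_mul_self_eq_one {n p : ℕ} {M : Matrix (Fin p) (Fin n) ℝ}
    (hM : Mᵀ * M = 1) (u : Fin n → ℝ) : enormv (M *ᵥ u) = enormv u := by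
  rw [enormv, enormv, dotv_mulVec_of_transpose_mul_self_eq_one hM]

lemma mulVec_ne_zero_of_transpose_mul_self_eq_one {n p : ℕ} {M : Matrix (Fin p) (Fin n) ℝ}
    (hM : Mᵀ * M = 1) {u : Fin n → ℝ} (hu : u ≠ 0) : M *ᵥ u ≠ 0 := by
  intro h
  apply hu
  rw [← one_mulVec u, ← hM, ← mulVec_mulVec, h, mulVec_zero]

lemma cosSim_mul_of_transpose_mul_self_eq_one {n m p : ℕ} {M : Matrix (Fin p) (Fin n) ℝ}
    (hM : Mᵀ * M = 1) (A : Matrix (Fin n) (Fin m) ℝ) : cosSim (M * A) = cosSim A := by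
  ext j k
  simp only [cosSim, col_mul, dotv_mulVec_of_transpose_mul_self_eq_one hM,
    enormv_mulVec_of_transpose_mul_self_eq_one hM]

lemma cosSim_mul_diagonal_of_pos {n m : ℕ} (A : Matrix (Fin n) (Fin m) ℝ) {d : Fin m → ℝ}
    (hd : ∀ j, 0 < d j) : cosSim (A * diagonal d) = cosSim A := by
  ext j k
  simp only [cosSim, col_mul_diagonal, dotv_smul_smul, enormv_smul_of_nonneg (hd _).le]
  rw [mul_mul_mul_comm, mul_div_mul_left _ _ (mul_pos (hd j) (hd k)).ne']

/-- If the centered matrix of `S` is obtained from the centered matrix of `O`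
by a matrix with orthonormal columns and a positive diagonal rescaling, then `S` has all
centered columns nonzero and the same Pearson correlation matrix as `O`. -/
theorem corr_of_orthonormal_mul_diag {n m p : ℕ}
    (O : Matrix (Fin n) (Fin m) ℝ) (hO : ∀ j, _root_.col (centM O) j ≠ 0)
    (M : Matrix (Fin p) (Fin n) ℝ) (hM : Mᵀ * M = 1)
    (d : Fin m → ℝ) (hd : ∀ j, 0 < d j)
    (S : Matrix (Fin p) (Fin m) ℝ) (hS : centM S = M * centM O * Matrix.diagonal d) :
    (∀ j, _root_.col (centM S) j ≠ 0) ∧ corrM S = corrM O := by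
  refine ⟨fun j => ?_, ?_⟩
  · rw [hS, col_mul_diagonal, col_mul]
    exact smul_ne_zero (hd j).ne' (mulVec_ne_zero_of_transpose_mul_self_eq_one hM (hO j))
  · rw [corrM, corrM, hS, cosSim_mul_diagonal_of_pos _ hd,
      cosSim_mul_of_transpose_mul_self_eq_one hM]
end

section
/- Let A, B ∈ ℝ^{n×m}, let U, V ∈ ℝ^{n×n} be orthogonal matrices and Σ ∈ ℝ^{n×n} diagonal with nonnegative diagonal entries such that B Aᵀ = U Σ Vᵀ. If d ∈ ℝ^n satisfies dᵀ B = 0, then dᵀ (U I_Σ Vᵀ A) = 0; in particular, if every column of B has zero mean, then every column of U I_Σ Vᵀ A has zero mean. -/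
open Matrix

/-! `dᵀB = 0` gives `(dᵀU) Σ Vᵀ = dᵀBAᵀ = 0`; cancelling `Vᵀ` (which has right inverse `V`) leaves
`(dᵀU)_i σ_i = 0` for all `i`, so `dᵀU` vanishes wherever `σ_i > 0` and is therefore killed by `I_Σ`
as well. -/

theorem vecMul_eq_zero_of_vecMul_mul_eq_zero {R ι κ μ : Type*} [Semiring R] [Fintype ι] [Fintype κ]
    [Fintype μ] [DecidableEq κ] {M : Matrix ι κ R} {N : Matrix κ μ R} {V : Matrix μ κ R}
    (hNV : N * V = 1) {w : ι → R} (h : w ᵥ* (M * N) = 0) : w ᵥ* M = 0 := by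
  calc w ᵥ* M = w ᵥ* (M * N) ᵥ* V := by rw [vecMul_vecMul, Matrix.mul_assoc, hNV, Matrix.mul_one]
    _ = 0 := by rw [h, zero_vecMul]

theorem vecMul_Isig_eq_zero {n : ℕ} {w σ : Fin n → ℝ} (h : w ᵥ* diagonal σ = 0) :
    w ᵥ* Isig σ = 0 := by
  funext i
  have hi : w i * σ i = 0 := by simpa only [vecMul_diagonal, Pi.zero_apply] using congrFun h i
  rw [Isig, vecMul_diagonal]
  split_ifs with hpos
  · simp [(mul_eq_zero.mp hi).resolve_right hpos.ne']
  · simp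

theorem vecMul_Procrustes_eq_zero_general {n m : ℕ}
    (A B : Matrix (Fin n) (Fin m) ℝ)
    (U V : Matrix (Fin n) (Fin n) ℝ) (hV : Vᵀ * V = 1)
    (σ : Fin n → ℝ)
    (hSVD : B * Aᵀ = U * Matrix.diagonal σ * Vᵀ) :
    (∀ d : Fin n → ℝ, Matrix.vecMul d B = 0 →
      Matrix.vecMul d (U * Isig σ * Vᵀ * A) = 0) ∧
    (Matrix.vecMul (fun _ => (1 : ℝ)) B = 0 →
      Matrix.vecMul (fun _ => (1 : ℝ)) (U * Isig σ * Vᵀ * A) = 0) := by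
  have annihilates : ∀ d : Fin n → ℝ, d ᵥ* B = 0 → d ᵥ* (U * Isig σ * Vᵀ * A) = 0 := by
    intro d hd
    have hdU : d ᵥ* U ᵥ* diagonal σ = 0 := by
      refine vecMul_eq_zero_of_vecMul_mul_eq_zero hV ?_
      rw [vecMul_vecMul, ← Matrix.mul_assoc, ← hSVD, ← vecMul_vecMul, hd, zero_vecMul]
    simp only [← vecMul_vecMul, vecMul_Isig_eq_zero hdU, zero_vecMul]
  exact ⟨annihilates, annihilates _⟩

/-- With `B Aᵀ = U Σ Vᵀ` (SVD data), any vector `d` with `dᵀ B = 0` also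
annihilates `U I_Σ Vᵀ A`; in particular, if every column of `B` has zero mean, then every
column of `U I_Σ Vᵀ A` has zero mean. -/
theorem vecMul_Procrustes_eq_zero {n m : ℕ}
    (A B : Matrix (Fin n) (Fin m) ℝ)
    (U V : Matrix (Fin n) (Fin n) ℝ) (hU : Uᵀ * U = 1) (hV : Vᵀ * V = 1)
    (σ : Fin n → ℝ) (hσ : ∀ i, 0 ≤ σ i)
    (hSVD : B * Aᵀ = U * Matrix.diagonal σ * Vᵀ) :
    (∀ d : Fin n → ℝ, Matrix.vecMul d B = 0 →
      Matrix.vecMul d (U * Isig σ * Vᵀ * A) = 0) ∧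
    (Matrix.vecMul (fun _ => (1 : ℝ)) B = 0 →
      Matrix.vecMul (fun _ => (1 : ℝ)) (U * Isig σ * Vᵀ * A) = 0) :=
  vecMul_Procrustes_eq_zero_general A B U V hV σ hSVD
end

section
/- Let Q, U, V ∈ ℝ^{n×n} be orthogonal matrices and let Σ ∈ ℝ^{n×n} be diagonal with nonnegative diagonal entries. Then tr(Q U Σ Vᵀ) ≤ tr(Σ). -/
open Matrix

/-! Writing `W = Vᵀ Q U`, which is again orthogonal, the cyclicity of the trace gives
`tr(Q U Σ Vᵀ) = tr(W Σ) = ∑ᵢ Wᵢᵢ σᵢ`. Every entry of an orthogonal matrix lies in `[-1, 1]`,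
so with `σᵢ ≥ 0` each summand is at most `σᵢ`. -/

namespace Matrix

variable {n R : Type*}

theorem transpose_eq_star [Star R] [TrivialStar R] (A : Matrix n n R) : Aᵀ = star A :=
  (conjTranspose_eq_transpose_of_trivial A).symm

variable [Fintype n] [DecidableEq n]

theorem mem_unitaryGroup_of_transpose_mul_self [CommRing R] [StarRing R] [TrivialStar R]
    {A : Matrix n n R} (hA : Aᵀ * A = 1) : A ∈ unitaryGroup n R :=
  mem_unitaryGroup_iff'.2 (transpose_eq_star A ▸ hA)

theorem apply_le_one_of_mem_unitaryGroup {A : Matrix n n ℝ} (hA : A ∈ unitaryGroup n ℝ)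
    (i j : n) : A i j ≤ 1 :=
  (le_abs_self _).trans (entry_norm_bound_of_unitary hA i j)

theorem trace_mul_diagonal_le_trace_diagonal [Semiring R] [PartialOrder R] [IsOrderedRing R]
    {A : Matrix n n R} {σ : n → R} (hA : ∀ i, A i i ≤ 1) (hσ : ∀ i, 0 ≤ σ i) :
    trace (A * diagonal σ) ≤ trace (diagonal σ) := by
  simp only [trace, diag_apply, mul_diagonal, diagonal_apply_eq]
  exact Finset.sum_le_sum fun i _ ↦ mul_le_of_le_one_left (hσ i) (hA i)

end Matrix

/-- For orthogonal `Q, U, V` and diagonal `Σ` with nonnegative entries,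
`tr(Q U Σ Vᵀ) ≤ tr(Σ)`. -/
theorem trace_orthogonal_mul_le {n : ℕ}
    (Q U V : Matrix (Fin n) (Fin n) ℝ)
    (hQ : Qᵀ * Q = 1) (hU : Uᵀ * U = 1) (hV : Vᵀ * V = 1)
    (σ : Fin n → ℝ) (hσ : ∀ i, 0 ≤ σ i) :
    Matrix.trace (Q * U * Matrix.diagonal σ * Vᵀ) ≤ Matrix.trace (Matrix.diagonal σ) := by
  have hW : Vᵀ * Q * U ∈ unitaryGroup (Fin n) ℝ := by
    rw [transpose_eq_star V]
    exact mul_mem (mul_mem (Unitary.star_mem (mem_unitaryGroup_of_transpose_mul_self hV))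
      (mem_unitaryGroup_of_transpose_mul_self hQ)) (mem_unitaryGroup_of_transpose_mul_self hU)
  calc trace (Q * U * diagonal σ * Vᵀ) = trace (Vᵀ * Q * U * diagonal σ) := by
        rw [trace_mul_comm]; simp only [Matrix.mul_assoc]
    _ ≤ trace (diagonal σ) :=
        trace_mul_diagonal_le_trace_diagonal (fun i ↦ apply_le_one_of_mem_unitaryGroup hW i i) hσ
end

section
/- (Orthogonal Procrustes) Let A, B ∈ ℝ^{n×m}, and let U, V ∈ ℝ^{n×n} be orthogonal matrices and Σ ∈ ℝ^{n×n} diagonal with nonnegative diagonal entries such that B Aᵀ = U Σ Vᵀ. Then for every orthogonal matrix Q ∈ ℝ^{n×n}, ‖U Vᵀ A − B‖_F ≤ ‖Q A − B‖_F; that is, Q* = U Vᵀ minimizes ‖Q A − B‖_F over orthogonal matrices Q. -/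
open Matrix

/-!
The squared Frobenius distance `‖QA - B‖²` equals `‖A‖² + ‖B‖² - 2 tr(Q A Bᵀ)` for orthogonal `Q`,
so it suffices to maximise `tr(Q A Bᵀ) = tr(Uᵀ Q V Σ) = ∑ᵢ (Uᵀ Q V)ᵢᵢ σᵢ`. Since `Uᵀ Q V` is
orthogonal its diagonal entries are at most `1`, so this is at most `∑ᵢ σᵢ`, which is attained
at `Q = U Vᵀ`, where `Uᵀ Q V = 1`.
-/

section Orthogonal

variable {ι κ : Type*} [Fintype ι] [DecidableEq ι] [Fintype κ]

theorem mem_unitaryGroup_iff_transpose_mul_self {Q : Matrix ι ι ℝ} :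
    Q ∈ unitaryGroup ι ℝ ↔ Qᵀ * Q = 1 := by
  rw [mem_unitaryGroup_iff', star_eq_conjTranspose, conjTranspose_eq_transpose_of_trivial]

theorem transpose_mem_unitaryGroup {Q : Matrix ι ι ℝ} (hQ : Q ∈ unitaryGroup ι ℝ) :
    Qᵀ ∈ unitaryGroup ι ℝ := by
  rw [mem_unitaryGroup_iff_transpose_mul_self] at hQ ⊢
  rw [transpose_transpose, mul_eq_one_comm, hQ]

theorem diag_le_one_of_mem_unitaryGroup {Z : Matrix ι ι ℝ} (hZ : Z ∈ unitaryGroup ι ℝ) (i : ι) :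
    Z i i ≤ 1 :=
  (le_abs_self _).trans (entry_norm_bound_of_unitary hZ i i)

theorem trace_mul_diagonal_le_sum {Z : Matrix ι ι ℝ} (hZ : Z ∈ unitaryGroup ι ℝ) {σ : ι → ℝ}
    (hσ : ∀ i, 0 ≤ σ i) : trace (Z * diagonal σ) ≤ ∑ i, σ i := by
  simp only [trace, diag, mul_diagonal]
  exact Finset.sum_le_sum fun i _ ↦
    mul_le_of_le_one_left (hσ i) (diag_le_one_of_mem_unitaryGroup hZ i)

theorem trace_mul_svd_le {U V Q : Matrix ι ι ℝ} (hU : U ∈ unitaryGroup ι ℝ)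
    (hV : V ∈ unitaryGroup ι ℝ) (hQ : Q ∈ unitaryGroup ι ℝ) {σ : ι → ℝ} (hσ : ∀ i, 0 ≤ σ i) :
    trace (Q * (V * diagonal σ * Uᵀ)) ≤ ∑ i, σ i := by
  have hZ : Uᵀ * Q * V ∈ unitaryGroup ι ℝ :=
    mul_mem (mul_mem (transpose_mem_unitaryGroup hU) hQ) hV
  calc trace (Q * (V * diagonal σ * Uᵀ)) = trace (Uᵀ * Q * V * diagonal σ) := by
        rw [← Matrix.mul_assoc, trace_mul_cycle, ← Matrix.mul_assoc]
    _ ≤ ∑ i, σ i := trace_mul_diagonal_le_sum hZ hσ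

theorem trace_mul_transpose_mul_svd {U V : Matrix ι ι ℝ} (hU : U ∈ unitaryGroup ι ℝ)
    (hV : V ∈ unitaryGroup ι ℝ) (σ : ι → ℝ) :
    trace (U * Vᵀ * (V * diagonal σ * Uᵀ)) = ∑ i, σ i := by
  calc trace (U * Vᵀ * (V * diagonal σ * Uᵀ)) = trace (Uᵀ * U * (Vᵀ * V) * diagonal σ) := by
        rw [trace_mul_cycle', ← Matrix.mul_assoc, ← Matrix.mul_assoc]
        simp only [Matrix.mul_assoc]
    _ = ∑ i, σ i := by
        rw [mem_unitaryGroup_iff_transpose_mul_self.1 hU,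
          mem_unitaryGroup_iff_transpose_mul_self.1 hV, Matrix.one_mul, Matrix.one_mul,
          trace_diagonal]

theorem trace_mul_sub_mul_transpose_of_mem_unitaryGroup {Q : Matrix ι ι ℝ}
    (hQ : Q ∈ unitaryGroup ι ℝ) (A B : Matrix ι κ ℝ) :
    trace ((Q * A - B) * (Q * A - B)ᵀ)
      = trace (A * Aᵀ) + trace (B * Bᵀ) - 2 * trace (Q * (A * Bᵀ)) := by
  have hQA : trace (Q * A * (Q * A)ᵀ) = trace (A * Aᵀ) := by
    rw [transpose_mul, ← Matrix.mul_assoc, trace_mul_cycle, ← Matrix.mul_assoc,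
      mem_unitaryGroup_iff_transpose_mul_self.1 hQ, Matrix.one_mul]
  have hBQA : trace (B * (Q * A)ᵀ) = trace (Q * (A * Bᵀ)) := by
    rw [← trace_transpose, transpose_mul, transpose_transpose, Matrix.mul_assoc]
  rw [transpose_sub, Matrix.sub_mul, Matrix.mul_sub, Matrix.mul_sub, trace_sub, trace_sub,
    trace_sub, hQA, hBQA, Matrix.mul_assoc]
  ring

end Orthogonal

theorem frob_eq_sqrt_trace {n m : ℕ} (M : Matrix (Fin n) (Fin m) ℝ) :
    frob M = √(trace (M * Mᵀ)) := by
  simp only [frob, trace, diag, mul_apply, transpose_apply, sq]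

/-- Orthogonal Procrustes: with `B Aᵀ = U Σ Vᵀ` (SVD data), the orthogonal
matrix `U Vᵀ` minimizes `‖Q A − B‖_F` over all orthogonal matrices `Q`. -/
theorem orthogonal_procrustes {n m : ℕ}
    (A B : Matrix (Fin n) (Fin m) ℝ)
    (U V : Matrix (Fin n) (Fin n) ℝ) (hU : Uᵀ * U = 1) (hV : Vᵀ * V = 1)
    (σ : Fin n → ℝ) (hσ : ∀ i, 0 ≤ σ i)
    (hSVD : B * Aᵀ = U * Matrix.diagonal σ * Vᵀ) :
    ∀ Q : Matrix (Fin n) (Fin n) ℝ, Qᵀ * Q = 1 →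
      frob (U * Vᵀ * A - B) ≤ frob (Q * A - B) := by
  intro Q hQ
  rw [← mem_unitaryGroup_iff_transpose_mul_self] at hU hV hQ
  have hABt : A * Bᵀ = V * diagonal σ * Uᵀ := by
    simpa only [transpose_mul, transpose_transpose, diagonal_transpose, Matrix.mul_assoc]
      using congrArg transpose hSVD
  have hUVt : U * Vᵀ ∈ unitaryGroup (Fin n) ℝ := mul_mem hU (transpose_mem_unitaryGroup hV)
  have hQ_le : trace (Q * (A * Bᵀ)) ≤ trace (U * Vᵀ * (A * Bᵀ)) := by
    rw [hABt, trace_mul_transpose_mul_svd hU hV]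
    exact trace_mul_svd_le hU hV hQ hσ
  rw [frob_eq_sqrt_trace, frob_eq_sqrt_trace,
    trace_mul_sub_mul_transpose_of_mem_unitaryGroup hUVt,
    trace_mul_sub_mul_transpose_of_mem_unitaryGroup hQ]
  gcongr
end

section
/- Let A, B ∈ ℝ^{n×m}, and let U, V ∈ ℝ^{n×n} be orthogonal matrices and Σ ∈ ℝ^{n×n} diagonal with nonnegative diagonal entries such that B Aᵀ = U Σ Vᵀ. If rank(B Aᵀ) = rank(A), then U I_Σ Vᵀ A = U Vᵀ A. -/
open Matrix

/-! Since range (A Bᵀ) ⊆ range A, equality of ranks makes the two ranges equal, so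
A = (A Bᵀ) X = V Σ Uᵀ X for some X. Then Vᵀ A = Σ Uᵀ X, and I_Σ Σ = Σ because the
diagonal of Σ is nonnegative. -/

namespace Matrix

variable {l m n : Type*} [Fintype m] [Fintype n]

theorem range_mulVecLin_mul_eq_of_rank_eq {K : Type*} [Field K] (A : Matrix l m K)
    (B : Matrix m n K) (h : (A * B).rank = A.rank) :
    LinearMap.range (A * B).mulVecLin = LinearMap.range A.mulVecLin := by
  refine Submodule.eq_of_le_of_finrank_eq ?_ h
  rw [mulVecLin_mul]
  exact LinearMap.range_comp_le_range _ _

theorem exists_mul_eq_of_range_mulVecLin_le {R : Type*} [CommSemiring R] (A : Matrix l n R)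
    (M : Matrix l m R) (h : LinearMap.range A.mulVecLin ≤ LinearMap.range M.mulVecLin) :
    ∃ X : Matrix m n R, M * X = A := by
  have hcol : ∀ j, ∃ x, M *ᵥ x = A.col j := fun j => by
    classical
    simpa only [LinearMap.mem_range, mulVecLin_apply, mulVec_single_one]
      using h ⟨Pi.single j 1, rfl⟩
  choose x hx using hcol
  refine ⟨(of x)ᵀ, ?_⟩
  ext i j
  simpa [mul_apply, mulVec, dotProduct] using congrFun (hx j) i

end Matrix

theorem Isig_mul_diagonal {n : ℕ} {σ : Fin n → ℝ} (hσ : ∀ i, 0 ≤ σ i) :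
    Isig σ * diagonal σ = diagonal σ := by
  rw [Isig, diagonal_mul_diagonal]
  congr 1
  ext i
  rcases (hσ i).lt_or_eq with h | h
  · simp [h]
  · simp [← h]

theorem Isig_mul_eq_of_rank_eq_general {n m : ℕ}
    (A B : Matrix (Fin n) (Fin m) ℝ)
    (U V : Matrix (Fin n) (Fin n) ℝ) (hV : Vᵀ * V = 1)
    (σ : Fin n → ℝ) (hσ : ∀ i, 0 ≤ σ i)
    (hSVD : B * Aᵀ = U * Matrix.diagonal σ * Vᵀ)
    (hrank : (B * Aᵀ).rank = A.rank) :
    U * Isig σ * Vᵀ * A = U * Vᵀ * A := by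
  have hABt : A * Bᵀ = V * diagonal σ * Uᵀ := by
    simpa [transpose_mul, Matrix.mul_assoc] using congrArg transpose hSVD
  have hrank' : (A * Bᵀ).rank = A.rank := by
    rw [← rank_transpose, transpose_mul, transpose_transpose, hrank]
  obtain ⟨X, hX⟩ := exists_mul_eq_of_range_mulVecLin_le A (A * Bᵀ)
    (range_mulVecLin_mul_eq_of_rank_eq A Bᵀ hrank').ge
  have hVA : Vᵀ * A = diagonal σ * (Uᵀ * X) := by
    rw [← hX, hABt, Matrix.mul_assoc, Matrix.mul_assoc, ← Matrix.mul_assoc Vᵀ, hV,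
      Matrix.one_mul]
  simp only [Matrix.mul_assoc]
  rw [hVA, ← Matrix.mul_assoc (Isig σ), Isig_mul_diagonal hσ]

/-- With `B Aᵀ = U Σ Vᵀ` (SVD data), if `rank(B Aᵀ) = rank(A)` then
`U I_Σ Vᵀ A = U Vᵀ A`. -/
theorem Isig_mul_eq_of_rank_eq {n m : ℕ}
    (A B : Matrix (Fin n) (Fin m) ℝ)
    (U V : Matrix (Fin n) (Fin n) ℝ) (hU : Uᵀ * U = 1) (hV : Vᵀ * V = 1)
    (σ : Fin n → ℝ) (hσ : ∀ i, 0 ≤ σ i)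
    (hSVD : B * Aᵀ = U * Matrix.diagonal σ * Vᵀ)
    (hrank : (B * Aᵀ).rank = A.rank) :
    U * Isig σ * Vᵀ * A = U * Vᵀ * A :=
  Isig_mul_eq_of_rank_eq_general A B U V hV σ hσ hSVD hrank
end

section
/- Let O, S ∈ ℝ^{n×m} where all centered columns Ō_j are nonzero, let μ ∈ ℝ^m, let σ ∈ ℝ^m with σ_j > 0 for all j, let N ∈ ℝ^{m×m} be the diagonal matrix with N_{jj} = σ_j√n/‖Ō_j‖, and let T = 𝟙μᵀ ∈ ℝ^{n×m}. Let U, V ∈ ℝ^{n×n} be orthogonal and Σ ∈ ℝ^{n×n} diagonal with nonnegative diagonal entries such that S̄(ŌN)ᵀ = UΣVᵀ, and assume rank(S̄(ŌN)ᵀ) = rank(ŌN). Set Ŝ = U I_Σ Vᵀ Ō N + T. Then for every matrix Ŝ' ∈ ℝ^{n×m} satisfying Mean(Ŝ'_j) = μ_j and Var(Ŝ'_j) = σ_j² for all j and Corr(Ŝ') = Corr(O), one has ‖Ŝ − S‖_F ≤ ‖Ŝ' − S‖_F; that is, Ŝ is a closest matrix to S in Frobenius norm among all matrices with prescribed means μ,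 variances σ², and Pearson correlation matrix equal to Corr(O). -/
/-!
Centering splits `‖Y - S‖²` into `‖Ȳ - S̄‖²` plus a term that only depends on the column means,
so only the centered parts have to be compared. Prescribed variances and correlations fix the
Gram matrix `ȲᵀȲ = BᵀB` with `B = ŌN`, hence `Ȳ = QB` for an orthogonal `Q`, and
`‖QB - S̄‖² = tr(BᵀB) - 2 tr(QᵀS̄Bᵀ) + tr(S̄ᵀS̄)`. Writing `S̄Bᵀ = UΣVᵀ`, the cross term is
`tr(VᵀQᵀU Σ) ≤ tr Σ` because an orthogonal matrix has diagonal entries at most `1`. The rank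
condition makes the projection `V I_Σ Vᵀ` fix `B`, so the polar factor `U I_Σ Vᵀ` preserves the
Gram matrix of `B` and attains `tr Σ` (orthogonal Procrustes problem).
-/

open Matrix

theorem LinearMap.exists_linearIsometry_comp_eq_of_norm_map_eq {𝕜 E F : Type*} [RCLike 𝕜]
    [AddCommGroup E] [Module 𝕜 E] [NormedAddCommGroup F] [InnerProductSpace 𝕜 F]
    [FiniteDimensional 𝕜 F] {f g : E →ₗ[𝕜] F} (h : ∀ v, ‖f v‖ = ‖g v‖) :
    ∃ Φ : F →ₗᵢ[𝕜] F, ∀ v, Φ (g v) = f v := by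
  obtain ⟨r, hr⟩ := g.rangeRestrict.exists_rightInverse_of_surjective g.range_rangeRestrict
  have hgr : ∀ w, g (r w) = w := fun w => congrArg Subtype.val (LinearMap.congr_fun hr w)
  let L : LinearMap.range g →ₗᵢ[𝕜] F :=
    { toLinearMap := f ∘ₗ r
      norm_map' := fun w => by simp [h, hgr] }
  refine ⟨L.extend, fun v => ?_⟩
  have hker : f (r ⟨g v, LinearMap.mem_range_self g v⟩) - f v = 0 := by
    rw [← map_sub, ← norm_eq_zero, h, map_sub, hgr, sub_self, norm_zero]
  rw [← sub_eq_zero.mp hker]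
  exact L.extend_apply ⟨g v, LinearMap.mem_range_self g v⟩

theorem Matrix.exists_orthogonal_mul_eq_of_transpose_mul_self_eq_s15 {ι κ : Type*} [Fintype ι]
    [DecidableEq ι] [Fintype κ] [DecidableEq κ] {X B : Matrix ι κ ℝ} (h : Xᵀ * X = Bᵀ * B) :
    ∃ Q : Matrix ι ι ℝ, Qᵀ * Q = 1 ∧ X = Q * B := by
  have hnorm : ∀ v, ‖toEuclideanLin X v‖ = ‖toEuclideanLin B v‖ := by
    intro v
    rw [← sq_eq_sq₀ (norm_nonneg _) (norm_nonneg _), ← real_inner_self_eq_norm_sq,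
      ← real_inner_self_eq_norm_sq]
    have hgram : ∀ A : Matrix ι κ ℝ,
        (A *ᵥ v.ofLp) ⬝ᵥ (A *ᵥ v.ofLp) = v.ofLp ⬝ᵥ (Aᵀ * A) *ᵥ v.ofLp := fun A => by
      rw [← mulVec_mulVec, dotProduct_mulVec, ← mulVec_transpose, dotProduct_comm]
    simp only [EuclideanSpace.inner_eq_star_dotProduct, toLpLin_apply, star_trivial, hgram, h]
  obtain ⟨Φ, hΦ⟩ := LinearMap.exists_linearIsometry_comp_eq_of_norm_map_eq hnorm
  refine ⟨toEuclideanLin.symm Φ.toLinearMap, toEuclideanLin.injective ?_,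
    toEuclideanLin.injective ?_⟩
  · rw [← conjTranspose_eq_transpose_of_trivial, toLpLin_mul_same,
      toEuclideanLin_conjTranspose_eq_adjoint]
    simp
  · rw [toLpLin_mul_same]
    ext v : 1
    simp [hΦ]

theorem Matrix.sum_sq_add_of_sum_eq_zero {ι κ : Type*} [Fintype ι] [Fintype κ] (D : Matrix ι κ ℝ)
    (g : κ → ℝ) (hD : ∀ j, ∑ i, D i j = 0) :
    ∑ i, ∑ j, (D i j + g j) ^ 2 = ∑ i, ∑ j, D i j ^ 2 + Fintype.card ι * ∑ j, g j ^ 2 := by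
  have hcross : ∑ i, ∑ j, D i j * g j = 0 := by
    rw [Finset.sum_comm]
    simp [← Finset.sum_mul, hD]
  simp only [add_sq, Finset.sum_add_distrib, mul_assoc, ← Finset.mul_sum, hcross]
  simp

theorem Matrix.sum_mul_apply_eq_zero {ι κ ν : Type*} [Fintype ι] [Fintype κ] {C : Matrix ι κ ℝ}
    (hC : ∀ j, ∑ i, C i j = 0) (K : Matrix κ ν ℝ) (j : ν) : ∑ i, (C * K) i j = 0 := by
  simp only [mul_apply]
  rw [Finset.sum_comm]
  simp [← Finset.sum_mul, hC]

theorem Matrix.sum_sq_sub_eq_trace {ι κ : Type*} [Fintype ι] [Fintype κ] (Y C : Matrix ι κ ℝ) :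
    ∑ i, ∑ j, (Y - C) i j ^ 2 = trace (Yᵀ * Y) - 2 * trace (Yᵀ * C) + trace (Cᵀ * C) := by
  have hsq : ∀ A : Matrix ι κ ℝ, ∑ i, ∑ j, A i j ^ 2 = trace (Aᵀ * A) := fun A => by
    simp only [trace, diag, mul_apply, transpose_apply, sq]
    exact Finset.sum_comm
  rw [hsq, transpose_sub, Matrix.sub_mul, Matrix.mul_sub, Matrix.mul_sub, trace_sub, trace_sub,
    trace_sub, ← trace_transpose (Cᵀ * Y), transpose_mul, transpose_transpose]
  ring

theorem Matrix.trace_mul_diagonal_le_sum {ι : Type*} [Fintype ι] [DecidableEq ι]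
    {W : Matrix ι ι ℝ} (hW : Wᵀ * W = 1) {s : ι → ℝ} (hs : ∀ i, 0 ≤ s i) :
    trace (W * diagonal s) ≤ ∑ i, s i := by
  have hdiag : ∀ i, W i i ≤ 1 := by
    intro i
    have hcol : ∑ k, W k i ^ 2 = 1 := by simpa [mul_apply, sq] using congrFun (congrFun hW i) i
    have : W i i ^ 2 ≤ 1 :=
      hcol ▸ Finset.single_le_sum (fun k _ => sq_nonneg (W k i)) (Finset.mem_univ i)
    nlinarith
  simp only [trace, diag, mul_diagonal]
  exact Finset.sum_le_sum fun i _ => mul_le_of_le_one_left (hs i) (hdiag i)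

theorem Matrix.mul_eq_self_of_mul_mul_eq {ι κ ν K : Type*} [Field K] [Fintype ι] [Fintype κ]
    [Fintype ν] {P : Matrix ι ι K} {B : Matrix ι κ K} {M : Matrix κ ν K}
    (hP : P * (B * M) = B * M) (hrank : (B * M).rank = B.rank) : P * B = B := by
  have hrange : LinearMap.range (B * M).mulVecLin = LinearMap.range B.mulVecLin :=
    Submodule.eq_of_le_of_finrank_le
      (by rw [mulVecLin_mul]; exact LinearMap.range_comp_le_range _ _) hrank.ge
  refine ext_iff_mulVec.2 fun v => ?_
  obtain ⟨w, hw⟩ : B *ᵥ v ∈ LinearMap.range (B * M).mulVecLin :=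
    hrange ▸ LinearMap.mem_range_self _ v
  rw [← mulVec_mulVec, ← hw, mulVecLin_apply, mulVec_mulVec, hP]

theorem sum_centv {n : ℕ} (f : Fin n → ℝ) : ∑ i, centv f i = 0 := by
  rcases eq_or_ne n 0 with rfl | hn
  · simp
  · simp only [centv, meanv, Finset.sum_sub_distrib, Finset.sum_const, Finset.card_univ,
      Fintype.card_fin, nsmul_eq_mul]
    field_simp
    ring

theorem sum_sq_centv {n : ℕ} (f : Fin n → ℝ) : ∑ i, centv f i ^ 2 = n * varv f := by
  rcases eq_or_ne n 0 with rfl | hn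
  · simp
  · rw [varv, mul_div_cancel₀ _ (Nat.cast_ne_zero.2 hn)]

theorem enormv_col_centM {n m : ℕ} (A : Matrix (Fin n) (Fin m) ℝ) (j : Fin m) :
    enormv (_root_.col (centM A) j) = √n * √(varv (_root_.col A j)) := by
  rw [← Real.sqrt_mul (Nat.cast_nonneg n), ← sum_sq_centv, enormv, dotv]
  simp only [sq]
  rfl

theorem eq_zero_of_enormv_eq_zero {n : ℕ} {u : Fin n → ℝ} (h : enormv u = 0) : u = 0 :=
  dotProduct_self_eq_zero.1
    ((Real.sqrt_eq_zero (Fintype.sum_nonneg fun i => mul_self_nonneg (u i))).1 h)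

theorem dotv_eq_cosSim_mul {n m : ℕ} (A : Matrix (Fin n) (Fin m) ℝ) (j k : Fin m) :
    dotv (_root_.col A j) (_root_.col A k) =
      cosSim A j k * (enormv (_root_.col A j) * enormv (_root_.col A k)) := by
  by_cases h : enormv (_root_.col A j) * enormv (_root_.col A k) = 0
  · rw [h, mul_zero]
    rcases mul_eq_zero.1 h with h | h <;> simp [dotv, eq_zero_of_enormv_eq_zero h]
  · rw [cosSim, div_mul_cancel₀ _ h]

theorem transpose_mul_self_centM_eq {n m : ℕ} {O Y : Matrix (Fin n) (Fin m) ℝ} {σ : Fin m → ℝ}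
    (hσ : ∀ j, 0 < σ j) (hvar : ∀ j, varv (_root_.col Y j) = σ j ^ 2) (hcorr : corrM Y = corrM O) :
    (centM Y)ᵀ * centM Y =
      (centM O * diagonal (fun j => σ j * √n / enormv (_root_.col (centM O) j)))ᵀ *
        (centM O * diagonal (fun j => σ j * √n / enormv (_root_.col (centM O) j))) := by
  have hnorm : ∀ j, enormv (_root_.col (centM Y) j) = √n * σ j := fun j => by
    rw [enormv_col_centM, hvar, Real.sqrt_sq (hσ j).le]
  ext j k
  rw [transpose_mul, diagonal_transpose, Matrix.mul_assoc, diagonal_mul, ← Matrix.mul_assoc,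
    mul_diagonal]
  change dotv (_root_.col (centM Y) j) (_root_.col (centM Y) k) =
    _ * (dotv (_root_.col (centM O) j) (_root_.col (centM O) k) * _)
  rw [dotv_eq_cosSim_mul, hnorm, hnorm, ← corrM, hcorr, corrM, cosSim]
  ring

theorem frob_sub_eq_of_apply_eq_add {n m : ℕ} (S : Matrix (Fin n) (Fin m) ℝ) (μ : Fin m → ℝ)
    {A Y : Matrix (Fin n) (Fin m) ℝ} (hA : ∀ j, ∑ i, A i j = 0) (hYA : ∀ i j, Y i j = A i j + μ j) :
    frob (Y - S) = √(∑ i, ∑ j, (A - centM S) i j ^ 2 +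
      n * ∑ j, (μ j - meanv (_root_.col S j)) ^ 2) := by
  have hC : ∀ j, ∑ i, centM S i j = 0 := fun j => sum_centv (_root_.col S j)
  have hsplit := sum_sq_add_of_sum_eq_zero (A - centM S) (fun j => μ j - meanv (_root_.col S j))
    fun j => by simp [Finset.sum_sub_distrib, hA, hC]
  rw [Fintype.card_fin] at hsplit
  rw [frob, ← hsplit]
  congr 1
  refine Finset.sum_congr rfl fun i _ => Finset.sum_congr rfl fun j _ => ?_
  rw [Matrix.sub_apply, Matrix.sub_apply, hYA, centM]
  ring

section Procrustes

variable {n : ℕ} {s : Fin n → ℝ}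

theorem transpose_Isig : (Isig s)ᵀ = Isig s :=
  diagonal_transpose _

theorem Isig_mul_Isig : Isig s * Isig s = Isig s := by
  rw [Isig, diagonal_mul_diagonal]
  congr 1
  funext i
  split_ifs <;> simp

theorem Isig_mul_diagonal_s15 (hs : ∀ i, 0 ≤ s i) : Isig s * diagonal s = diagonal s := by
  rw [Isig, diagonal_mul_diagonal]
  congr 1
  funext i
  split_ifs with h
  · exact one_mul _
  · rw [zero_mul, le_antisymm (not_lt.1 h) (hs i)]

theorem Isig_eq_diagonal_mul_diagonal_inv (hs : ∀ i, 0 ≤ s i) :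
    Isig s = diagonal s * diagonal s⁻¹ := by
  rw [Isig, diagonal_mul_diagonal]
  congr 1
  funext i
  split_ifs with h
  · exact (mul_inv_cancel₀ h.ne').symm
  · simp [le_antisymm (not_lt.1 h) (hs i)]

variable {κ : Type*} [Fintype κ] {B C : Matrix (Fin n) κ ℝ} {U V : Matrix (Fin n) (Fin n) ℝ}

theorem trace_transpose_mul_le_of_svd (hU : Uᵀ * U = 1) (hV : Vᵀ * V = 1) (hs : ∀ i, 0 ≤ s i)
    (hSVD : C * Bᵀ = U * diagonal s * Vᵀ) {Q : Matrix (Fin n) (Fin n) ℝ} (hQ : Qᵀ * Q = 1) :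
    trace ((Q * B)ᵀ * C) ≤ ∑ i, s i := by
  have hW : (Vᵀ * Qᵀ * U)ᵀ * (Vᵀ * Qᵀ * U) = 1 := by
    simp only [transpose_mul, transpose_transpose, Matrix.mul_assoc]
    rw [← Matrix.mul_assoc V, mul_eq_one_comm.1 hV, Matrix.one_mul, ← Matrix.mul_assoc Q,
      mul_eq_one_comm.1 hQ, Matrix.one_mul, hU]
  calc trace ((Q * B)ᵀ * C) = trace (Vᵀ * Qᵀ * U * diagonal s) := by
        rw [transpose_mul, Matrix.mul_assoc, trace_mul_comm, Matrix.mul_assoc, hSVD]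
        simp only [Matrix.mul_assoc]
        rw [trace_mul_comm Vᵀ]
        simp only [Matrix.mul_assoc]
    _ ≤ ∑ i, s i := trace_mul_diagonal_le_sum hW hs

theorem trace_polar_transpose_mul_eq_sum (hU : Uᵀ * U = 1) (hV : Vᵀ * V = 1)
    (hs : ∀ i, 0 ≤ s i) (hSVD : C * Bᵀ = U * diagonal s * Vᵀ) :
    trace ((U * Isig s * Vᵀ * B)ᵀ * C) = ∑ i, s i := by
  calc trace ((U * Isig s * Vᵀ * B)ᵀ * C)
      = trace (V * (Isig s * (Uᵀ * U) * diagonal s) * Vᵀ) := by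
        rw [transpose_mul, Matrix.mul_assoc, trace_mul_comm, Matrix.mul_assoc, hSVD]
        simp only [transpose_mul, transpose_transpose, transpose_Isig, Matrix.mul_assoc]
    _ = ∑ i, s i := by
        rw [hU, Matrix.mul_one, Isig_mul_diagonal_s15 hs, trace_mul_comm, ← Matrix.mul_assoc, hV,
          Matrix.one_mul, trace_diagonal]

theorem polar_transpose_mul_self (hU : Uᵀ * U = 1) (hV : Vᵀ * V = 1) (hs : ∀ i, 0 ≤ s i)
    (hSVD : C * Bᵀ = U * diagonal s * Vᵀ) (hrank : (C * Bᵀ).rank = B.rank) :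
    (U * Isig s * Vᵀ * B)ᵀ * (U * Isig s * Vᵀ * B) = Bᵀ * B := by
  have hfix : V * Isig s * Vᵀ * B = B := by
    refine mul_eq_self_of_mul_mul_eq (M := Cᵀ) ?_ (by rw [← rank_transpose, transpose_mul,
      transpose_transpose, hrank])
    rw [← transpose_transpose (B * Cᵀ), transpose_mul, transpose_transpose, hSVD]
    simp only [transpose_mul, transpose_transpose, diagonal_transpose, Matrix.mul_assoc]
    rw [← Matrix.mul_assoc Vᵀ V, hV, Matrix.one_mul, ← Matrix.mul_assoc (Isig s),
      Isig_mul_diagonal_s15 hs]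
  calc (U * Isig s * Vᵀ * B)ᵀ * (U * Isig s * Vᵀ * B)
      = Bᵀ * (V * (Isig s * (Uᵀ * U) * Isig s) * Vᵀ * B) := by
        simp only [transpose_mul, transpose_transpose, transpose_Isig, Matrix.mul_assoc]
    _ = Bᵀ * B := by rw [hU, Matrix.mul_one, Isig_mul_Isig, hfix]

theorem sum_polar_mul_apply_eq_zero (hV : Vᵀ * V = 1) (hs : ∀ i, 0 ≤ s i)
    (hSVD : C * Bᵀ = U * diagonal s * Vᵀ) (hC : ∀ j, ∑ i, C i j = 0) (j : κ) :
    ∑ i, (U * Isig s * Vᵀ * B) i j = 0 := by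
  have hpolar : U * Isig s * Vᵀ = C * (Bᵀ * (V * diagonal s⁻¹ * Vᵀ)) := by
    rw [← Matrix.mul_assoc, hSVD, Isig_eq_diagonal_mul_diagonal_inv hs]
    simp only [Matrix.mul_assoc]
    rw [← Matrix.mul_assoc Vᵀ V, hV, Matrix.one_mul]
  rw [hpolar, Matrix.mul_assoc]
  exact sum_mul_apply_eq_zero hC _ j

theorem sum_sq_polar_sub_le (hU : Uᵀ * U = 1) (hV : Vᵀ * V = 1) (hs : ∀ i, 0 ≤ s i)
    (hSVD : C * Bᵀ = U * diagonal s * Vᵀ) (hrank : (C * Bᵀ).rank = B.rank)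
    {Q : Matrix (Fin n) (Fin n) ℝ} (hQ : Qᵀ * Q = 1) :
    ∑ i, ∑ j, (U * Isig s * Vᵀ * B - C) i j ^ 2 ≤ ∑ i, ∑ j, (Q * B - C) i j ^ 2 := by
  have hQB : (Q * B)ᵀ * (Q * B) = Bᵀ * B := by
    rw [transpose_mul, Matrix.mul_assoc, ← Matrix.mul_assoc Qᵀ, hQ, Matrix.one_mul]
  rw [sum_sq_sub_eq_trace, sum_sq_sub_eq_trace, polar_transpose_mul_self hU hV hs hSVD hrank,
    hQB, trace_polar_transpose_mul_eq_sum hU hV hs hSVD]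
  linarith [trace_transpose_mul_le_of_svd hU hV hs hSVD hQ]

end Procrustes

theorem procrustes_synthetic_data_optimality_general {n m : ℕ}
    (O S : Matrix (Fin n) (Fin m) ℝ)
    (μ σ : Fin m → ℝ) (hσ : ∀ j, 0 < σ j)
    (N : Matrix (Fin m) (Fin m) ℝ)
    (hN : N = Matrix.diagonal (fun j => σ j * Real.sqrt n / enormv (_root_.col (centM O) j)))
    (T : Matrix (Fin n) (Fin m) ℝ) (hT : T = fun _ j => μ j)
    (U V : Matrix (Fin n) (Fin n) ℝ) (hU : Uᵀ * U = 1) (hV : Vᵀ * V = 1)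
    (s : Fin n → ℝ) (hs : ∀ i, 0 ≤ s i)
    (hSVD : centM S * (centM O * N)ᵀ = U * Matrix.diagonal s * Vᵀ)
    (hrank : (centM S * (centM O * N)ᵀ).rank = (centM O * N).rank)
    (Shat : Matrix (Fin n) (Fin m) ℝ)
    (hShat : Shat = U * Isig s * Vᵀ * (centM O * N) + T) :
    ∀ Shat' : Matrix (Fin n) (Fin m) ℝ,
      (∀ j, meanv (_root_.col Shat' j) = μ j) → (∀ j, varv (_root_.col Shat' j) = (σ j) ^ 2) →
      corrM Shat' = corrM O →
      frob (Shat - S) ≤ frob (Shat' - S) := by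
  intro Shat' hmean hvar hcorr
  obtain ⟨Q, hQ, hXQ⟩ :
      ∃ Q : Matrix (Fin n) (Fin n) ℝ, Qᵀ * Q = 1 ∧ centM Shat' = Q * (centM O * N) :=
    exists_orthogonal_mul_eq_of_transpose_mul_self_eq_s15
      (by rw [hN]; exact transpose_mul_self_centM_eq hσ hvar hcorr)
  have hC : ∀ j, ∑ i, centM S i j = 0 := fun j => sum_centv (_root_.col S j)
  rw [frob_sub_eq_of_apply_eq_add S μ (sum_polar_mul_apply_eq_zero hV hs hSVD hC)
      fun i j => by rw [hShat, hT]; rfl,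
    frob_sub_eq_of_apply_eq_add S μ (A := centM Shat') (fun j => sum_centv _)
      fun i j => by rw [centM, hmean]; ring,
    hXQ]
  gcongr √(?_ + _)
  exact sum_sq_polar_sub_le hU hV hs hSVD hrank hQ

/-- The matrix `Ŝ = U I_Σ Vᵀ Ō N + T` built from an SVD
`S̄(ŌN)ᵀ = U Σ Vᵀ` (under the rank condition `rank(S̄(ŌN)ᵀ) = rank(ŌN)`) is a closest
matrix to `S` in Frobenius norm among all matrices with prescribed means `μ`, variances
`σ²`, and Pearson correlation matrix equal to `Corr(O)`. -/
theorem procrustes_synthetic_data_optimality {n m : ℕ}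
    (O S : Matrix (Fin n) (Fin m) ℝ) (hO : ∀ j, _root_.col (centM O) j ≠ 0)
    (μ σ : Fin m → ℝ) (hσ : ∀ j, 0 < σ j)
    (N : Matrix (Fin m) (Fin m) ℝ)
    (hN : N = Matrix.diagonal (fun j => σ j * Real.sqrt n / enormv (_root_.col (centM O) j)))
    (T : Matrix (Fin n) (Fin m) ℝ) (hT : T = fun _ j => μ j)
    (U V : Matrix (Fin n) (Fin n) ℝ) (hU : Uᵀ * U = 1) (hV : Vᵀ * V = 1)
    (s : Fin n → ℝ) (hs : ∀ i, 0 ≤ s i)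
    (hSVD : centM S * (centM O * N)ᵀ = U * Matrix.diagonal s * Vᵀ)
    (hrank : (centM S * (centM O * N)ᵀ).rank = (centM O * N).rank)
    (Shat : Matrix (Fin n) (Fin m) ℝ)
    (hShat : Shat = U * Isig s * Vᵀ * (centM O * N) + T) :
    ∀ Shat' : Matrix (Fin n) (Fin m) ℝ,
      (∀ j, meanv (_root_.col Shat' j) = μ j) → (∀ j, varv (_root_.col Shat' j) = (σ j) ^ 2) →
      corrM Shat' = corrM O →
      frob (Shat - S) ≤ frob (Shat' - S) :=
  procrustes_synthetic_data_optimality_general O S μ σ hσ N hN T hT U V hU hV s hs hSVD hrank Shat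
    hShat
end
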